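/- Assume the knots are equally spaced, so that a_i = 1/N for all i, assume each q_i is Lipschitz continuous, and let f be the bounded fractal function. Define f̂(s) = ∫_{x_0}^{x_N} e^{jsx} f(x) dx, Q̂(s) = ∫_{x_0}^{x_N} e^{jsx} Q(x) dx with Q(x) = q_i(L_i^{-1}(x)) for x ∈ I_i, and Λ(s) = (1/N) ∑_{i=1}^N α_i e^{j s b_i}. Then for every real s the series ∑_{k=0}^∞ (∏_{m=1}^k Λ(s/N^{m−1})) Q̂(s/N^k) converges (the k-th summand is bounded in modulus by M·|α|_∞^k where |α|_∞ = max_i|α_i| < 1 and M is a bound for |Q̂|), and f̂(s) = ∑_{k=0}^∞ (∏_{m=1}^k Λ(s/N^{m−1})) Q̂(s/N^k), where the empty product (k = 0) equals 1. -/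

import Mathlib

/-!
Substituting `t = L_i u` on the `i`-th subinterval turns `f (L_i u) = α_i f u + q_i u`
into `f̂(s) = Λ(s) f̂(s/N) + Q̂(s)`, because every `L_i` has slope `1/N`. Since
`|Λ| ≤ max |α_i| < 1` and `f̂` is bounded, unrolling this identity leaves a remainder
`(∏ Λ) f̂(s/N^k)` that tends to zero.

The integrals are meaningful because `f` is measurable: with `S` the map sending each `I_i`
back onto `I` by `L_i⁻¹`, the same unrolling in space writes
`f = ∑_k (∏_{m<k} α(S^m t)) Q(S^k t)` on `I`, a pointwise limit of measurable functions.
-/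

open Set

noncomputable def aC (x : ℕ → ℝ) (N i : ℕ) : ℝ := (x (i + 1) - x i) / (x N - x 0)

noncomputable def bC (x : ℕ → ℝ) (N i : ℕ) : ℝ := (x N * x i - x 0 * x (i + 1)) / (x N - x 0)

/-- The affine map `L i t = a i * t + b i`. -/
noncomputable def Lm (x : ℕ → ℝ) (N i : ℕ) (t : ℝ) : ℝ := aC x N i * t + bC x N i

/-- The inverse `L i ⁻¹ t = (t - b i) / a i` of the affine map `L i`. -/
noncomputable def LmInv (x : ℕ → ℝ) (N i : ℕ) (t : ℝ) : ℝ := (t - bC x N i) / aC x N i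

open MeasureTheory Filter Topology

section FunctionalEquation

variable {𝕜 : Type*} [NormedField 𝕜] {F Q Λ : ℝ → 𝕜} {c r B : ℝ}

theorem sum_range_eq_sub_of_functional_eq (hrec : ∀ σ, F σ = Λ σ * F (σ / c) + Q σ)
    (s : ℝ) (K : ℕ) :
    ∑ k ∈ Finset.range K, (∏ m ∈ Finset.range k, Λ (s / c ^ m)) * Q (s / c ^ k) =
      F s - (∏ m ∈ Finset.range K, Λ (s / c ^ m)) * F (s / c ^ K) := by
  induction K with
  | zero => simp
  | succ K ih =>
    have h := hrec (s / c ^ K)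
    rw [div_div, ← pow_succ] at h
    rw [Finset.sum_range_succ, ih, Finset.prod_range_succ]
    linear_combination (-∏ m ∈ Finset.range K, Λ (s / c ^ m)) * h

theorem norm_prod_mul_le (hΛ : ∀ σ, ‖Λ σ‖ ≤ r) {G : ℝ → 𝕜} {C : ℝ} (hG : ∀ σ, ‖G σ‖ ≤ C)
    (s : ℝ) (k : ℕ) :
    ‖(∏ m ∈ Finset.range k, Λ (s / c ^ m)) * G (s / c ^ k)‖ ≤ r ^ k * C := by
  have hr : 0 ≤ r := (norm_nonneg _).trans (hΛ 0)
  have hprod : ∏ m ∈ Finset.range k, ‖Λ (s / c ^ m)‖ ≤ r ^ k := by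
    simpa using Finset.prod_le_prod (s := Finset.range k) (fun _ _ => norm_nonneg _) fun m _ =>
      hΛ (s / c ^ m)
  rw [norm_mul, norm_prod]
  exact mul_le_mul hprod (hG _) (norm_nonneg _) (pow_nonneg hr k)

theorem hasSum_of_functional_eq [CompleteSpace 𝕜] (hr : r < 1) (hF : ∀ σ, ‖F σ‖ ≤ B)
    (hΛ : ∀ σ, ‖Λ σ‖ ≤ r)
    (hrec : ∀ σ, F σ = Λ σ * F (σ / c) + Q σ) (s : ℝ) :
    HasSum (fun k => (∏ m ∈ Finset.range k, Λ (s / c ^ m)) * Q (s / c ^ k)) (F s) := by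
  have hr0 : 0 ≤ r := (norm_nonneg _).trans (hΛ 0)
  have hQ : ∀ σ, ‖Q σ‖ ≤ B + r * B := fun σ =>
    calc ‖Q σ‖ = ‖F σ - Λ σ * F (σ / c)‖ := by rw [hrec σ, add_sub_cancel_left]
      _ ≤ B + r * B := (norm_sub_le _ _).trans <| add_le_add (hF σ) <| by
          rw [norm_mul]; exact mul_le_mul (hΛ σ) (hF _) (norm_nonneg _) hr0
  have hsum : Summable fun k => (∏ m ∈ Finset.range k, Λ (s / c ^ m)) * Q (s / c ^ k) :=
    .of_norm_bounded ((summable_geometric_of_lt_one hr0 hr).mul_right _)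
      (norm_prod_mul_le hΛ hQ s)
  have hrem : Tendsto (fun K => (∏ m ∈ Finset.range K, Λ (s / c ^ m)) * F (s / c ^ K))
      atTop (𝓝 0) :=
    squeeze_zero_norm (norm_prod_mul_le hΛ hF s) <| by
      simpa using (tendsto_pow_atTop_nhds_zero_of_lt_one hr0 hr).mul_const B
  rw [hsum.hasSum_iff_tendsto_nat]
  simp_rw [sum_range_eq_sub_of_functional_eq hrec]
  simpa using tendsto_const_nhds.sub hrem

end FunctionalEquation

section SelfSimilar

variable {X : Type*} {E : Set X} {S : X → X} {w Q f : X → ℝ}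

theorem sub_sum_iterate_eq (hS : MapsTo S E E) (hf : ∀ t ∈ E, f t = w t * f (S t) + Q t)
    {t : X} (ht : t ∈ E) (K : ℕ) :
    f t - ∑ k ∈ Finset.range K, (∏ m ∈ Finset.range k, w (S^[m] t)) * Q (S^[k] t) =
      (∏ m ∈ Finset.range K, w (S^[m] t)) * f (S^[K] t) := by
  induction K with
  | zero => simp
  | succ K ih =>
    rw [Finset.sum_range_succ, Finset.prod_range_succ, Function.iterate_succ_apply', ← sub_sub,
      ih, hf _ (hS.iterate K ht)]
    ring

theorem tendsto_sum_iterate (hS : MapsTo S E E) (hf : ∀ t ∈ E, f t = w t * f (S t) + Q t)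
    {r M : ℝ} (hr : r < 1) (hw : ∀ t ∈ E, |w t| ≤ r) (hM : ∀ t ∈ E, |f t| ≤ M)
    {t : X} (ht : t ∈ E) :
    Tendsto (fun K => ∑ k ∈ Finset.range K, (∏ m ∈ Finset.range k, w (S^[m] t)) * Q (S^[k] t))
      atTop (𝓝 (f t)) := by
  have hr0 : 0 ≤ r := (abs_nonneg _).trans (hw t ht)
  rw [tendsto_iff_norm_sub_tendsto_zero]
  refine squeeze_zero (fun _ => norm_nonneg _) (fun K => ?_) <| by
    simpa using (tendsto_pow_atTop_nhds_zero_of_lt_one hr0 hr).mul_const M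
  have hprod : ∏ m ∈ Finset.range K, |w (S^[m] t)| ≤ r ^ K := by
    simpa using Finset.prod_le_prod (s := Finset.range K) (fun _ _ => abs_nonneg _) fun m _ =>
      hw _ (hS.iterate m ht)
  rw [norm_sub_rev, Real.norm_eq_abs, sub_sum_iterate_eq hS hf ht, abs_mul, Finset.abs_prod]
  exact mul_le_mul hprod (hM _ (hS.iterate K ht)) (abs_nonneg _) (pow_nonneg hr0 K)

theorem measurable_indicator_of_self_similar [MeasurableSpace X] (hE : MeasurableSet E)
    (hSm : Measurable S) (hwm : Measurable w) (hQm : Measurable Q) (hS : MapsTo S E E)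
    (hf : ∀ t ∈ E, f t = w t * f (S t) + Q t) {r M : ℝ} (hr : r < 1)
    (hw : ∀ t ∈ E, |w t| ≤ r) (hM : ∀ t ∈ E, |f t| ≤ M) :
    Measurable (E.indicator f) := by
  refine measurable_of_tendsto_metrizable (f := fun K => E.indicator fun t =>
      ∑ k ∈ Finset.range K, (∏ m ∈ Finset.range k, w (S^[m] t)) * Q (S^[k] t))
    (fun K => ?_) (tendsto_pi_nhds.2 fun t => ?_)
  · refine Measurable.indicator ?_ hE
    exact Finset.measurable_sum _ fun k _ =>
      (Finset.measurable_prod _ fun m _ => hwm.comp (hSm.iterate m)).mul (hQm.comp (hSm.iterate k))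
  · by_cases ht : t ∈ E
    · simpa only [indicator_of_mem ht] using tendsto_sum_iterate hS hf hr hw hM ht
    · simpa only [indicator_of_notMem ht] using tendsto_const_nhds

theorem abs_le_two_mul_of_self_similar (hS : MapsTo S E E)
    (hf : ∀ t ∈ E, f t = w t * f (S t) + Q t) {M : ℝ} (hw : ∀ t ∈ E, |w t| ≤ 1)
    (hM : ∀ t ∈ E, |f t| ≤ M) {t : X} (ht : t ∈ E) : |Q t| ≤ 2 * M := by
  rw [show Q t = f t - w t * f (S t) by linarith [hf t ht]]
  calc |f t - w t * f (S t)| ≤ |f t| + |w t| * |f (S t)| := by rw [← abs_mul]; exact abs_sub _ _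
    _ ≤ M + 1 * M := by gcongr; exacts [hM t ht, hw t ht, hM _ (hS ht)]
    _ = 2 * M := by ring

theorem abs_indicator_le {s : Set X} {g : X → ℝ} {C : ℝ} (hC : 0 ≤ C)
    (hg : ∀ t ∈ s, |g t| ≤ C) (t : X) : |s.indicator g t| ≤ C := by
  by_cases ht : t ∈ s
  · rw [indicator_of_mem ht]; exact hg t ht
  · rwa [indicator_of_notMem ht, abs_zero]

end SelfSimilar

theorem continuousOn_of_abs_sub_le_mul {g : ℝ → ℝ} {s : Set ℝ} {C : ℝ}
    (h : ∀ u ∈ s, ∀ v ∈ s, |g u - g v| ≤ C * |u - v|) : ContinuousOn g s :=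
  (LipschitzOnWith.of_dist_le_mul (K := C.toNNReal) fun u hu v hv => by
    simpa only [Real.dist_eq] using
      (h u hu v hv).trans (mul_le_mul_of_nonneg_right C.le_coe_toNNReal (abs_nonneg _)))
    |>.continuousOn

theorem exists_abs_le_of_abs_lt_one {α : ℕ → ℝ} {N : ℕ} (hN : 0 < N)
    (hα : ∀ i < N, |α i| < 1) : ∃ r < 1, ∀ i < N, |α i| ≤ r := by
  obtain ⟨i₀, hi₀, hmax⟩ :=
    (Finset.range N).exists_max_image (fun i => |α i|) ⟨0, Finset.mem_range.2 hN⟩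
  exact ⟨|α i₀|, hα i₀ (Finset.mem_range.1 hi₀), fun i hi => hmax i (Finset.mem_range.2 hi)⟩

section IntervalFourier

noncomputable def intervalFourier (g : ℝ → ℝ) (a b σ : ℝ) : ℂ :=
  ∫ t in a..b, Complex.exp (((σ * t : ℝ) : ℂ) * Complex.I) * ((g t : ℝ) : ℂ)

variable {g : ℝ → ℝ} {C : ℝ}

theorem norm_exp_mul_I_mul (σ t : ℝ) :
    ‖Complex.exp (((σ * t : ℝ) : ℂ) * Complex.I) * ((g t : ℝ) : ℂ)‖ = |g t| := by
  rw [norm_mul, Complex.norm_exp_ofReal_mul_I, one_mul, Complex.norm_real, Real.norm_eq_abs]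

theorem intervalIntegrable_exp_mul_I_mul (hg : Measurable g) (hC : ∀ t, |g t| ≤ C)
    (σ a b : ℝ) :
    IntervalIntegrable (fun t => Complex.exp (((σ * t : ℝ) : ℂ) * Complex.I) * ((g t : ℝ) : ℂ))
      volume a b :=
  (intervalIntegrable_const (c := C)).mono_fun (by fun_prop) <| ae_of_all _ fun t => by
    dsimp only
    rw [norm_exp_mul_I_mul, Real.norm_eq_abs]; exact (hC t).trans (le_abs_self C)

theorem norm_intervalFourier_le (hC : ∀ t, |g t| ≤ C) (a b σ : ℝ) :
    ‖intervalFourier g a b σ‖ ≤ C * |b - a| :=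
  intervalIntegral.norm_integral_le_of_norm_le_const fun t _ => by
    rw [norm_exp_mul_I_mul]; exact hC t

theorem intervalFourier_indicator_Icc {a b : ℝ} (hab : a ≤ b) (σ : ℝ) :
    intervalFourier ((Icc a b).indicator g) a b σ = intervalFourier g a b σ :=
  intervalIntegral.integral_congr fun t ht => by
    rw [uIcc_of_le hab] at ht
    simp only [indicator_of_mem ht]

theorem integral_exp_mul_I_mul_comp_affine {a : ℝ} (ha : a ≠ 0) (b c d σ : ℝ) :
    ∫ t in (a * c + b)..(a * d + b),
        Complex.exp (((σ * t : ℝ) : ℂ) * Complex.I) * ((g ((t - b) / a) : ℝ) : ℂ) =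
      a * Complex.exp (((σ * b : ℝ) : ℂ) * Complex.I) * intervalFourier g c d (a * σ) := by
  have hexp : ∀ u : ℝ, Complex.exp (((σ * (a * u + b) : ℝ) : ℂ) * Complex.I) =
      Complex.exp (((σ * b : ℝ) : ℂ) * Complex.I) *
        Complex.exp (((a * σ * u : ℝ) : ℂ) * Complex.I) := fun u => by
    rw [← Complex.exp_add]; push_cast; ring_nf
  rw [← intervalIntegral.smul_integral_comp_mul_add]
  simp only [add_sub_cancel_right, mul_div_cancel_left₀ _ ha, hexp, mul_assoc,
    intervalIntegral.integral_const_mul, Complex.real_smul, intervalFourier]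

theorem intervalFourier_affine_piece {a b c d α σ C' : ℝ} {Q : ℝ → ℝ} (ha : 0 < a) (hcd : c ≤ d)
    (hg : Measurable g) (hgb : ∀ t, |g t| ≤ C) (hQ : Measurable Q) (hQb : ∀ t, |Q t| ≤ C')
    (hgQ : ∀ t ∈ Ioo (a * c + b) (a * d + b), g t = α * g ((t - b) / a) + Q t) :
    intervalFourier g (a * c + b) (a * d + b) σ =
      α * a * Complex.exp (((σ * b : ℝ) : ℂ) * Complex.I) * intervalFourier g c d (a * σ) +
        intervalFourier Q (a * c + b) (a * d + b) σ := by
  have hle : a * c + b ≤ a * d + b := by gcongr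
  have hgL : Measurable fun t => g ((t - b) / a) := hg.comp (by fun_prop)
  rw [mul_assoc (α : ℂ), mul_assoc (α : ℂ), ← integral_exp_mul_I_mul_comp_affine ha.ne',
    intervalFourier, intervalFourier, ← intervalIntegral.integral_const_mul,
    ← intervalIntegral.integral_add
      ((intervalIntegrable_exp_mul_I_mul hgL (fun t => hgb _) σ _ _).const_mul _)
      (intervalIntegrable_exp_mul_I_mul hQ hQb σ _ _)]
  refine intervalIntegral.integral_congr_Ioo_of_le hle fun t ht => ?_
  simp only [hgQ t ht]
  push_cast
  ring

end IntervalFourier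

section Knots

variable {x : ℕ → ℝ} {N i : ℕ} {t : ℝ}

theorem Lm_left (hx : x N ≠ x 0) (i : ℕ) : Lm x N i (x 0) = x i := by
  have : x N - x 0 ≠ 0 := sub_ne_zero.2 hx
  unfold Lm aC bC; field_simp; ring

theorem Lm_right (hx : x N ≠ x 0) (i : ℕ) : Lm x N i (x N) = x (i + 1) := by
  have : x N - x 0 ≠ 0 := sub_ne_zero.2 hx
  unfold Lm aC bC; field_simp; ring

theorem LmInv_Lm (ha : aC x N i ≠ 0) (u : ℝ) : LmInv x N i (Lm x N i u) = u := by
  unfold Lm LmInv; field_simp; ring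

theorem Lm_LmInv (ha : aC x N i ≠ 0) (t : ℝ) : Lm x N i (LmInv x N i t) = t := by
  unfold Lm LmInv; field_simp; ring

theorem LmInv_mem_Ico (hx : x N ≠ x 0) (ha : 0 < aC x N i) (ht : t ∈ Ico (x i) (x (i + 1))) :
    LmInv x N i t ∈ Ico (x 0) (x N) := by
  rw [← Lm_left hx, ← Lm_right hx] at ht
  unfold Lm at ht
  unfold LmInv
  exact ⟨(le_div_iff₀ ha).2 (by linarith [ht.1]), (div_lt_iff₀ ha).2 (by linarith [ht.2])⟩

def EquallySpaced (x : ℕ → ℝ) (N : ℕ) : Prop :=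
  ∀ i, i ≤ N → x i = x 0 + (i : ℝ) * (x N - x 0) / (N : ℝ)

namespace EquallySpaced

theorem eq_add_mul (hx : EquallySpaced x N) (hi : i ≤ N) :
    x i = x 0 + i * ((x N - x 0) / N) := by
  rw [hx i hi, mul_div_assoc]

theorem mem_Icc (h0N : x 0 < x N) (hx : EquallySpaced x N) (hi : i ≤ N) :
    x i ∈ Icc (x 0) (x N) := by
  have hh : 0 ≤ (x N - x 0) / N := div_nonneg (sub_pos.2 h0N).le (Nat.cast_nonneg N)
  have hiN : (i : ℝ) * ((x N - x 0) / N) ≤ N * ((x N - x 0) / N) :=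
    mul_le_mul_of_nonneg_right (by exact_mod_cast hi) hh
  have hxN := hx.eq_add_mul (le_refl N)
  rw [hx.eq_add_mul hi]
  constructor <;> nlinarith [mul_nonneg (Nat.cast_nonneg i : (0 : ℝ) ≤ i) hh]

theorem aC_eq (hN : 0 < N) (h0N : x 0 < x N) (hx : EquallySpaced x N) (hi : i < N) :
    aC x N i = (N : ℝ)⁻¹ := by
  have : x N - x 0 ≠ 0 := (sub_pos.2 h0N).ne'
  unfold aC
  rw [hx.eq_add_mul hi.le, hx.eq_add_mul hi]
  field_simp
  push_cast
  ring

theorem aC_pos (hN : 0 < N) (h0N : x 0 < x N) (hx : EquallySpaced x N) (hi : i < N) :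
    0 < aC x N i := by
  rw [hx.aC_eq hN h0N hi]; positivity

end EquallySpaced

-- The `min` puts the right endpoint `x N` into the last piece, which is closed.
noncomputable def knotIndex (x : ℕ → ℝ) (N : ℕ) (t : ℝ) : ℕ :=
  min (N - 1) ⌊(t - x 0) / ((x N - x 0) / N)⌋₊

noncomputable def knotShift (x : ℕ → ℝ) (N : ℕ) (t : ℝ) : ℝ :=
  LmInv x N (knotIndex x N t) t

theorem knotIndex_lt (hN : 0 < N) (t : ℝ) : knotIndex x N t < N :=
  (min_le_left _ _).trans_lt (Nat.sub_lt hN one_pos)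

theorem measurable_knotIndex : Measurable (knotIndex x N) :=
  measurable_from_nat.comp (Nat.measurable_floor.comp (by fun_prop))

theorem measurable_knotShift : Measurable (knotShift x N) := by
  have ha : Measurable fun t => aC x N (knotIndex x N t) :=
    (measurable_from_nat (f := aC x N)).comp measurable_knotIndex
  have hb : Measurable fun t => bC x N (knotIndex x N t) :=
    (measurable_from_nat (f := bC x N)).comp measurable_knotIndex
  unfold knotShift LmInv
  fun_prop

theorem mem_Ico_knotIndex (hN : 0 < N) (h0N : x 0 < x N) (hx : EquallySpaced x N)
    (ht : t ∈ Ico (x 0) (x N)) :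
    t ∈ Ico (x (knotIndex x N t)) (x (knotIndex x N t + 1)) := by
  set h := (x N - x 0) / N
  have hh : 0 < h := div_pos (sub_pos.2 h0N) (Nat.cast_pos.2 hN)
  set u := (t - x 0) / h
  have hu0 : 0 ≤ u := div_nonneg (sub_nonneg.2 ht.1) hh.le
  have huN : u < N := by
    rw [div_lt_iff₀ hh]
    linarith [ht.2, hx.eq_add_mul (le_refl N)]
  have hj : ⌊u⌋₊ < N := Nat.floor_lt hu0 |>.2 huN
  have hidx : knotIndex x N t = ⌊u⌋₊ := min_eq_right (Nat.le_sub_one_of_lt hj)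
  have hlo : (⌊u⌋₊ : ℝ) * h ≤ t - x 0 := (le_div_iff₀ hh).1 (Nat.floor_le hu0)
  have hhi : t - x 0 < (⌊u⌋₊ + 1 : ℝ) * h := (div_lt_iff₀ hh).1 (Nat.lt_floor_add_one u)
  rw [hidx, hx.eq_add_mul hj.le, hx.eq_add_mul hj]
  push_cast
  constructor <;> linarith

theorem knotIndex_right (hN : 0 < N) (h0N : x 0 < x N) : knotIndex x N (x N) = N - 1 := by
  have : (x N - x 0) / ((x N - x 0) / N) = N := by
    field_simp [(sub_pos.2 h0N).ne']
  rw [knotIndex, this, Nat.floor_natCast]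
  exact min_eq_left (Nat.sub_le N 1)

theorem Lm_sub_one_right (hN : 0 < N) (h0N : x 0 < x N) : Lm x N (N - 1) (x N) = x N := by
  rw [Lm_right h0N.ne', Nat.sub_add_cancel hN]

theorem LmInv_sub_one_right (hN : 0 < N) (h0N : x 0 < x N) (hx : EquallySpaced x N) :
    LmInv x N (N - 1) (x N) = x N := by
  conv_lhs => rw [← Lm_sub_one_right hN h0N]
  exact LmInv_Lm (hx.aC_pos hN h0N (Nat.sub_lt hN one_pos)).ne' _

theorem knotShift_right (hN : 0 < N) (h0N : x 0 < x N) (hx : EquallySpaced x N) :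
    knotShift x N (x N) = x N := by
  rw [knotShift, knotIndex_right hN h0N, LmInv_sub_one_right hN h0N hx]

theorem mapsTo_knotShift (hN : 0 < N) (h0N : x 0 < x N) (hx : EquallySpaced x N) :
    MapsTo (knotShift x N) (Icc (x 0) (x N)) (Icc (x 0) (x N)) := by
  intro t ht
  rcases ht.2.eq_or_lt with rfl | htN
  · rw [knotShift_right hN h0N hx]; exact right_mem_Icc.2 h0N.le
  · exact Ico_subset_Icc_self <| LmInv_mem_Ico h0N.ne'
      (hx.aC_pos hN h0N (knotIndex_lt hN t)) (mem_Ico_knotIndex hN h0N hx ⟨ht.1, htN⟩)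

theorem measurable_comp_knotIndex (hN : 0 < N) {g : ℕ → ℝ → ℝ} (hg : ∀ i < N, Measurable (g i))
    {φ : ℝ → ℝ} (hφ : Measurable φ) : Measurable fun t => g (knotIndex x N t) (φ t) := by
  have h : Measurable fun p : ℝ × ℕ => if p.2 < N then g p.2 p.1 else 0 :=
    measurable_from_prod_countable_left fun i => by
      by_cases hi : i < N
      · simpa only [hi, if_true] using hg i hi
      · simpa only [hi, if_false] using measurable_const
  convert h.comp (hφ.prodMk (measurable_knotIndex (x := x) (N := N))) using 1
  funext t
  simp [knotIndex_lt hN t]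

end Knots

section FractalFunction

variable {x : ℕ → ℝ} {N : ℕ} {α : ℕ → ℝ} {q : ℕ → ℝ → ℝ} {f Qf : ℝ → ℝ} {i : ℕ} {t : ℝ}

theorem eq_mul_LmInv_add (hN : 0 < N) (h0N : x 0 < x N) (hx : EquallySpaced x N)
    (hfe : ∀ i, i < N → ∀ t ∈ Ico (x 0) (x N), f (Lm x N i t) = α i * f t + q i t)
    (hQf : ∀ i, i < N → ∀ t ∈ Ico (x i) (x (i + 1)), Qf t = q i (LmInv x N i t))
    (hi : i < N) (ht : t ∈ Ico (x i) (x (i + 1))) :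
    f t = α i * f (LmInv x N i t) + Qf t := by
  have ha := hx.aC_pos hN h0N hi
  rw [hQf i hi t ht, ← hfe i hi _ (LmInv_mem_Ico h0N.ne' ha ht), Lm_LmInv ha.ne']

theorem eq_mul_knotShift_add (hN : 0 < N) (h0N : x 0 < x N) (hx : EquallySpaced x N)
    (hfe : ∀ i, i < N → ∀ t ∈ Ico (x 0) (x N), f (Lm x N i t) = α i * f t + q i t)
    (hfeN : f (Lm x N (N - 1) (x N)) = α (N - 1) * f (x N) + q (N - 1) (x N))
    (hQf : ∀ i, i < N → ∀ t ∈ Ico (x i) (x (i + 1)), Qf t = q i (LmInv x N i t))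
    (hQfN : Qf (x N) = q (N - 1) (LmInv x N (N - 1) (x N))) (ht : t ∈ Icc (x 0) (x N)) :
    f t = α (knotIndex x N t) * f (knotShift x N t) + Qf t := by
  rcases ht.2.eq_or_lt with rfl | htN
  · rw [knotShift_right hN h0N hx, knotIndex_right hN h0N, hQfN, LmInv_sub_one_right hN h0N hx,
      ← hfeN, Lm_sub_one_right hN h0N]
  · exact eq_mul_LmInv_add hN h0N hx hfe hQf (knotIndex_lt hN t)
      (mem_Ico_knotIndex hN h0N hx ⟨ht.1, htN⟩)

theorem eq_q_knotShift (hN : 0 < N) (h0N : x 0 < x N) (hx : EquallySpaced x N)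
    (hQf : ∀ i, i < N → ∀ t ∈ Ico (x i) (x (i + 1)), Qf t = q i (LmInv x N i t))
    (hQfN : Qf (x N) = q (N - 1) (LmInv x N (N - 1) (x N))) (ht : t ∈ Icc (x 0) (x N)) :
    Qf t = q (knotIndex x N t) (knotShift x N t) := by
  rcases ht.2.eq_or_lt with rfl | htN
  · rw [hQfN, knotIndex_right hN h0N, knotShift_right hN h0N hx, LmInv_sub_one_right hN h0N hx]
  · exact hQf _ (knotIndex_lt hN t) t (mem_Ico_knotIndex hN h0N hx ⟨ht.1, htN⟩)

theorem indicator_eq_mul_LmInv_add (hN : 0 < N) (h0N : x 0 < x N) (hx : EquallySpaced x N)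
    (hfe : ∀ i, i < N → ∀ t ∈ Ico (x 0) (x N), f (Lm x N i t) = α i * f t + q i t)
    (hQf : ∀ i, i < N → ∀ t ∈ Ico (x i) (x (i + 1)), Qf t = q i (LmInv x N i t))
    (hi : i < N) (ht : t ∈ Ico (x i) (x (i + 1))) :
    (Icc (x 0) (x N)).indicator f t =
      α i * (Icc (x 0) (x N)).indicator f (LmInv x N i t) + (Icc (x 0) (x N)).indicator Qf t := by
  have htI : t ∈ Icc (x 0) (x N) :=
    ⟨(hx.mem_Icc h0N hi.le).1.trans ht.1, ht.2.le.trans (hx.mem_Icc h0N hi).2⟩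
  rw [indicator_of_mem htI, indicator_of_mem htI, indicator_of_mem
    (Ico_subset_Icc_self (LmInv_mem_Ico h0N.ne' (hx.aC_pos hN h0N hi) ht))]
  exact eq_mul_LmInv_add hN h0N hx hfe hQf hi ht

theorem measurable_indicator_of_eq_q_knotShift (hN : 0 < N) (h0N : x 0 < x N)
    (hx : EquallySpaced x N) (hq : ∀ i < N, ContinuousOn (q i) (Icc (x 0) (x N)))
    (hQ : ∀ t ∈ Icc (x 0) (x N), Qf t = q (knotIndex x N t) (knotShift x N t)) :
    Measurable ((Icc (x 0) (x N)).indicator Qf) := by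
  let P := projIcc (x 0) (x N) h0N.le
  have hqP : ∀ i < N, Measurable fun u => q i (P u) := fun i hi =>
    ((hq i hi).comp_continuous (continuous_subtype_val.comp continuous_projIcc)
      fun u => (P u).2).measurable
  have hQP : EqOn Qf (fun t => q (knotIndex x N t) (P (knotShift x N t))) (Icc (x 0) (x N)) :=
    fun t ht => by
      dsimp only [P]
      rw [hQ t ht, projIcc_of_mem _ (mapsTo_knotShift hN h0N hx ht)]
  rw [indicator_congr hQP]
  exact (measurable_comp_knotIndex hN hqP measurable_knotShift).indicator measurableSet_Icc

-- The paper's `Λ`.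
noncomputable def fractalMultiplier (x : ℕ → ℝ) (N : ℕ) (α : ℕ → ℝ) (σ : ℝ) : ℂ :=
  (N : ℂ)⁻¹ * ∑ i ∈ Finset.range N,
    (α i : ℂ) * Complex.exp (((σ * bC x N i : ℝ) : ℂ) * Complex.I)

theorem norm_fractalMultiplier_le (hN : 0 < N) {r : ℝ} (hα : ∀ i < N, |α i| ≤ r) (σ : ℝ) :
    ‖fractalMultiplier x N α σ‖ ≤ r := by
  have hsum : ‖∑ i ∈ Finset.range N,
      (α i : ℂ) * Complex.exp (((σ * bC x N i : ℝ) : ℂ) * Complex.I)‖ ≤ N * r :=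
    calc _ ≤ ∑ i ∈ Finset.range N,
          ‖(α i : ℂ) * Complex.exp (((σ * bC x N i : ℝ) : ℂ) * Complex.I)‖ := norm_sum_le _ _
      _ ≤ ∑ _i ∈ Finset.range N, r := Finset.sum_le_sum fun i hi => by
          rw [norm_mul, Complex.norm_exp_ofReal_mul_I, mul_one, Complex.norm_real,
            Real.norm_eq_abs]
          exact hα i (Finset.mem_range.1 hi)
      _ = N * r := by simp
  rw [fractalMultiplier, norm_mul, norm_inv, Complex.norm_natCast, inv_mul_le_iff₀ (by positivity)]
  exact hsum

theorem intervalFourier_eq_fractalMultiplier_mul_add (hN : 0 < N) (h0N : x 0 < x N)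
    (hx : EquallySpaced x N) {F Q : ℝ → ℝ} {C C' : ℝ} (hF : Measurable F)
    (hFb : ∀ t, |F t| ≤ C) (hQ : Measurable Q) (hQb : ∀ t, |Q t| ≤ C')
    (hpiece : ∀ i < N, ∀ t ∈ Ico (x i) (x (i + 1)), F t = α i * F (LmInv x N i t) + Q t)
    (σ : ℝ) :
    intervalFourier F (x 0) (x N) σ =
      fractalMultiplier x N α σ * intervalFourier F (x 0) (x N) (σ / N) +
        intervalFourier Q (x 0) (x N) σ := by
  have hsplit : ∀ {g : ℝ → ℝ} {D : ℝ}, Measurable g → (∀ t, |g t| ≤ D) →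
      intervalFourier g (x 0) (x N) σ =
        ∑ i ∈ Finset.range N, intervalFourier g (x i) (x (i + 1)) σ := fun hg hgb =>
    (intervalIntegral.sum_integral_adjacent_intervals fun _ _ =>
      intervalIntegrable_exp_mul_I_mul hg hgb σ _ _).symm
  have hpieceF : ∀ i ∈ Finset.range N, intervalFourier F (x i) (x (i + 1)) σ =
      (α i : ℂ) * (N : ℂ)⁻¹ * Complex.exp (((σ * bC x N i : ℝ) : ℂ) * Complex.I) *
          intervalFourier F (x 0) (x N) (σ / N) + intervalFourier Q (x i) (x (i + 1)) σ := by
    intro i hi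
    rw [Finset.mem_range] at hi
    have hL0 : aC x N i * x 0 + bC x N i = x i := Lm_left h0N.ne' i
    have hLN : aC x N i * x N + bC x N i = x (i + 1) := Lm_right h0N.ne' i
    have h := intervalFourier_affine_piece (σ := σ) (hx.aC_pos hN h0N hi) h0N.le hF hFb hQ hQb
      (by rw [hL0, hLN]; exact fun t ht => hpiece i hi t (Ioo_subset_Ico_self ht))
    rw [hL0, hLN, hx.aC_eq hN h0N hi, inv_mul_eq_div] at h
    rw [h]
    push_cast
    ring
  rw [hsplit hF hFb, hsplit hQ hQb, Finset.sum_congr rfl hpieceF, Finset.sum_add_distrib,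
    fractalMultiplier, Finset.mul_sum, Finset.sum_mul]
  congr 1
  exact Finset.sum_congr rfl fun i _ => by ring

end FractalFunction

/-- For equally spaced knots, the Fourier-type transform of the bounded fractal function is
given by the convergent series `f̂(s) = ∑_{k=0}^∞ (∏_{m=1}^k Λ(s/N^{m-1})) Q̂(s/N^k)`, where
`Λ(s) = (1/N) ∑ i α i e^{j s b i}`. -/
theorem stmt17
    (N : ℕ) (hN : 2 ≤ N)
    (x : ℕ → ℝ)
    (hx0N : x 0 < x N)
    (hxeq : ∀ i, i ≤ N → x i = x 0 + (i : ℝ) * (x N - x 0) / (N : ℝ))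
    (α : ℕ → ℝ) (hα : ∀ i, i < N → |α i| < 1)
    (q : ℕ → ℝ → ℝ)
    (hq : ∀ i, i < N → ∃ C, ∀ u ∈ Icc (x 0) (x N), ∀ v ∈ Icc (x 0) (x N),
      |q i u - q i v| ≤ C * |u - v|)
    (f : ℝ → ℝ)
    (hfb : ∃ M, ∀ t ∈ Icc (x 0) (x N), |f t| ≤ M)
    (hfe : ∀ i, i < N → ∀ t ∈ Ico (x 0) (x N), f (Lm x N i t) = α i * f t + q i t)
    (hfeN : f (Lm x N (N - 1) (x N)) = α (N - 1) * f (x N) + q (N - 1) (x N))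
    (Qf : ℝ → ℝ)
    (hQf : ∀ i, i < N → ∀ t ∈ Ico (x i) (x (i + 1)), Qf t = q i (LmInv x N i t))
    (hQfN : Qf (x N) = q (N - 1) (LmInv x N (N - 1) (x N))) :
    ∀ s : ℝ,
      HasSum
        (fun k : ℕ =>
          (∏ m ∈ Finset.range k,
            ((N : ℂ))⁻¹ * ∑ i ∈ Finset.range N,
              ((α i : ℝ) : ℂ) *
                Complex.exp (((s / (N : ℝ) ^ m * bC x N i : ℝ) : ℂ) * Complex.I)) *
          ∫ t in (x 0)..(x N),
            Complex.exp (((s / (N : ℝ) ^ k * t : ℝ) : ℂ) * Complex.I) * ((Qf t : ℝ) : ℂ))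
        (∫ t in (x 0)..(x N),
          Complex.exp (((s * t : ℝ) : ℂ) * Complex.I) * ((f t : ℝ) : ℂ)) := by
  intro s
  obtain ⟨M, hM⟩ := hfb
  have hN0 : 0 < N := by omega
  have hM0 : 0 ≤ M := (abs_nonneg _).trans (hM _ (left_mem_Icc.2 hx0N.le))
  obtain ⟨r, hr1, hr⟩ := exists_abs_le_of_abs_lt_one hN0 hα
  have hS := mapsTo_knotShift hN0 hx0N hxeq
  have hself : ∀ t ∈ Icc (x 0) (x N), f t =
      α (knotIndex x N t) * f (knotShift x N t) + (Icc (x 0) (x N)).indicator Qf t :=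
    fun t ht => by
      rw [indicator_of_mem ht]; exact eq_mul_knotShift_add hN0 hx0N hxeq hfe hfeN hQf hQfN ht
  have hw : ∀ t ∈ Icc (x 0) (x N), |α (knotIndex x N t)| ≤ r :=
    fun t _ => hr _ (knotIndex_lt hN0 t)
  have hQm := measurable_indicator_of_eq_q_knotShift hN0 hx0N hxeq
    (fun i hi => (hq i hi).elim fun _ hC => continuousOn_of_abs_sub_le_mul hC)
    (fun t ht => eq_q_knotShift hN0 hx0N hxeq hQf hQfN ht)
  have hFm := measurable_indicator_of_self_similar measurableSet_Icc measurable_knotShift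
    ((measurable_from_nat (f := α)).comp measurable_knotIndex) hQm hS hself hr1 hw hM
  have hFb := abs_indicator_le hM0 hM
  have hQb := abs_indicator_le (g := Qf) (C := 2 * M) (by positivity) fun t ht => by
    have h := abs_le_two_mul_of_self_similar hS hself (fun t ht => (hw t ht).trans hr1.le) hM ht
    rwa [indicator_of_mem ht] at h
  have hrec := intervalFourier_eq_fractalMultiplier_mul_add hN0 hx0N hxeq hFm hFb hQm hQb
    fun i hi t ht => indicator_eq_mul_LmInv_add hN0 hx0N hxeq hfe hQf hi ht
  have key := hasSum_of_functional_eq hr1 (fun σ => norm_intervalFourier_le hFb _ _ σ)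
    (norm_fractalMultiplier_le hN0 hr) hrec s
  simp only [intervalFourier_indicator_Icc hx0N.le] at key
  exact key
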